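/- Let C ⊆ F_2^n be a binary linear code, let j be a coordinate such that some codeword has x_j = 1, let d_j be the minimum Hamming weight among codewords of C with x_j = 1, and let S ⊆ {k : k ≠ j} be a set of 'already updated' positions. Suppose q : (0,1) → ([0,1]^{k ≠ j}) assigns erasure probabilities with q_k(ε) = ε for k ∉ S, while for k ∈ S one has q_k(ε)/ε → 0 as ε → 0+. Then lim_{ε → 0+} Φ_{C,j}(q(ε))/ε^{d_j − 1} = h_j, where h_j = #{x ∈ C : x_j = 1, w(x) = d_j, supp(x) ∩ S = ∅}. -/

import Mathlib

/-!
After division by `ε ^ (d - 1)`, an erasure pattern `E` contributes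
`∏_{k ∈ E} (q_k / ε) · ε ^ (|E| - (d - 1)) · ∏_{k ∉ E} (1 - q_k)`. A pattern hiding `j` has
`|E| ≥ d - 1`, so only the hiding patterns of size exactly `d - 1` that avoid `S` survive in the
limit, each contributing `1`; these are the supports, with `j` removed, of the minimum-weight
codewords through `j` that vanish on `S`.
-/

open Finset
open scoped Classical

/-- Hamming weight of a binary word. -/
def wt {n : ℕ} (x : Fin n → ZMod 2) : ℕ := (univ.filter (fun j => x j ≠ 0)).card

/-- `phi C i q` is the probability, when the all-zero codeword is sent over a binary erasure
channel in which position `j ≠ i` is erased independently with probability `q j`, that the APP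
decoder's output message to position `i` is an erasure: the sum, over erasure patterns
`E ⊆ {j | j ≠ i}` such that some codeword `x ∈ C` has `x i = 1` and support contained in
`E ∪ {i}`, of the probability of the pattern `E`. -/
noncomputable def phi {n : ℕ} (C : Submodule (ZMod 2) (Fin n → ZMod 2)) (i : Fin n)
    (q : Fin n → ℝ) : ℝ :=
  ∑ E ∈ (univ.erase i).powerset,
    if ∃ x ∈ C, x i = 1 ∧ univ.filter (fun j => x j ≠ 0) ⊆ insert i E
    then (∏ j ∈ E, q j) * ∏ j ∈ (univ.erase i) \ E, (1 - q j)
    else 0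

open Filter Topology

def supp {n : ℕ} (x : Fin n → ZMod 2) : Finset (Fin n) := univ.filter (fun k => x k ≠ 0)

/-- The APP decoder's message to `i` is an erasure exactly when the erased positions `E`
hide `i`. -/
def Hides {n : ℕ} (C : Submodule (ZMod 2) (Fin n → ZMod 2)) (i : Fin n) (E : Finset (Fin n)) :
    Prop :=
  ∃ x ∈ C, x i = 1 ∧ supp x ⊆ insert i E

lemma phi_eq_sum_hides {n : ℕ} (C : Submodule (ZMod 2) (Fin n → ZMod 2)) (i : Fin n)
    (q : Fin n → ℝ) :
    phi C i q = ∑ E ∈ (univ.erase i).powerset,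
      if Hides C i E then (∏ j ∈ E, q j) * ∏ j ∈ (univ.erase i) \ E, (1 - q j) else 0 :=
  Finset.sum_congr rfl fun _ _ => if_congr Iff.rfl rfl rfl

section BinaryWords

variable {n : ℕ}

@[simp]
lemma mem_supp {x : Fin n → ZMod 2} {k : Fin n} : k ∈ supp x ↔ x k ≠ 0 := by
  simp [supp]

lemma wt_eq_card_supp (x : Fin n → ZMod 2) : wt x = (supp x).card := rfl

lemma supp_injective : Function.Injective (supp : (Fin n → ZMod 2) → Finset (Fin n)) := by
  intro x y hxy
  funext k
  have hk : x k ≠ 0 ↔ y k ≠ 0 := by rw [← mem_supp, ← mem_supp, hxy]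
  revert hk
  generalize x k = a
  generalize y k = b
  revert a b
  decide

lemma pos_of_wt_eq {x : Fin n → ZMod 2} {j : Fin n} {d : ℕ} (hxj : x j = 1) (hxd : wt x = d) :
    0 < d := by
  rw [← hxd, wt_eq_card_supp]
  exact Finset.card_pos.2 ⟨j, by simp [hxj]⟩

end BinaryWords

section Hides

variable {n : ℕ} {C : Submodule (ZMod 2) (Fin n → ZMod 2)} {j : Fin n} {d : ℕ} {E : Finset (Fin n)}

lemma Hides.le_card_add_one (hd : ∀ x ∈ C, x j = 1 → d ≤ wt x) (hE : Hides C j E)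
    (hjE : j ∉ E) : d ≤ E.card + 1 := by
  obtain ⟨x, hxC, hxj, hsupp⟩ := hE
  calc d ≤ (supp x).card := hd x hxC hxj
    _ ≤ (insert j E).card := Finset.card_le_card hsupp
    _ = E.card + 1 := Finset.card_insert_of_notMem hjE

lemma Hides.exists_supp_eq (hd : ∀ x ∈ C, x j = 1 → d ≤ wt x) (hE : Hides C j E)
    (hjE : j ∉ E) (hcard : E.card + 1 = d) :
    ∃ x ∈ C, x j = 1 ∧ supp x = insert j E := by
  obtain ⟨x, hxC, hxj, hsupp⟩ := hE
  refine ⟨x, hxC, hxj, Finset.eq_of_subset_of_card_le hsupp ?_⟩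
  rw [Finset.card_insert_of_notMem hjE, hcard]
  exact hd x hxC hxj

/-- The bijection is `x ↦ supp x \ {j}`. -/
lemma card_minimal_hiding_patterns (hd : ∀ x ∈ C, x j = 1 → d ≤ wt x) (hd_pos : 0 < d)
    {S : Finset (Fin n)} (hjS : j ∉ S) :
    ((univ.erase j).powerset.filter
        (fun E => Hides C j E ∧ Disjoint E S ∧ E.card = d - 1)).card =
      {x : Fin n → ZMod 2 | x ∈ C ∧ x j = 1 ∧ wt x = d ∧ ∀ k ∈ S, x k = 0}.ncard := by
  rw [← Set.ncard_coe_finset]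
  symm
  refine Set.ncard_congr (fun x _ => (supp x).erase j) ?_ ?_ ?_
  · rintro x ⟨hxC, hxj, hxd, hxS⟩
    have hj : j ∈ supp x := by simp [hxj]
    simp only [Finset.coe_filter, Set.mem_ofPred_eq, Finset.mem_powerset]
    refine ⟨Finset.erase_subset_erase j (Finset.subset_univ _),
      ⟨x, hxC, hxj, by rw [Finset.insert_erase hj]⟩, ?_, ?_⟩
    · rw [Finset.disjoint_left]
      intro k hk hkS
      exact (mem_supp.1 (Finset.mem_of_mem_erase hk)) (hxS k hkS)
    · rw [Finset.card_erase_of_mem hj, ← wt_eq_card_supp, hxd]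
  · rintro x y ⟨-, hxj, -⟩ ⟨-, hyj, -⟩ hxy
    apply supp_injective
    rw [← Finset.insert_erase (show j ∈ supp x by simp [hxj]),
      ← Finset.insert_erase (show j ∈ supp y by simp [hyj]), hxy]
  · intro E hE
    simp only [Finset.coe_filter, Set.mem_ofPred_eq, Finset.mem_powerset] at hE
    obtain ⟨hED, hEC, hES, hEd⟩ := hE
    have hjE : j ∉ E := fun h => (Finset.mem_erase.1 (hED h)).1 rfl
    obtain ⟨x, hxC, hxj, hsupp⟩ := hEC.exists_supp_eq hd hjE (by omega)
    refine ⟨x, ⟨hxC, hxj, ?_, fun k hkS => ?_⟩, by simp only [hsupp, Finset.erase_insert hjE]⟩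
    · rw [wt_eq_card_supp, hsupp, Finset.card_insert_of_notMem hjE]
      omega
    · by_contra hk
      have : k ∈ insert j E := hsupp ▸ mem_supp.2 hk
      rcases Finset.mem_insert.1 this with rfl | hkE
      · exact hjS hkS
      · exact Finset.disjoint_left.1 hES hkE hkS

end Hides

section Asymptotics

lemma tendsto_nhds_zero_of_tendsto_div_self {f : ℝ → ℝ} {c : ℝ}
    (hf : Tendsto (fun ε => f ε / ε) (𝓝[>] 0) (𝓝 c)) : Tendsto f (𝓝[>] 0) (𝓝 0) := by
  have hε : Tendsto (fun ε : ℝ => ε) (𝓝[>] 0) (𝓝 0) :=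
    tendsto_nhdsWithin_of_tendsto_nhds tendsto_id
  refine (mul_zero c ▸ hf.mul hε).congr' ?_
  filter_upwards [self_mem_nhdsWithin] with ε hε
  exact div_mul_cancel₀ _ (ne_of_gt hε)

lemma tendsto_pattern_prob_div_pow {ι : Type*} {E D : Finset ι} {p : ℝ → ι → ℝ} {c : ι → ℝ}
    {m : ℕ} (hm : m ≤ E.card)
    (hE : ∀ k ∈ E, Tendsto (fun ε => p ε k / ε) (𝓝[>] 0) (𝓝 (c k)))
    (hD : ∀ k ∈ D, Tendsto (fun ε => p ε k) (𝓝[>] 0) (𝓝 0)) :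
    Tendsto (fun ε => (∏ k ∈ E, p ε k) * (∏ k ∈ D, (1 - p ε k)) / ε ^ m) (𝓝[>] 0)
      (𝓝 ((∏ k ∈ E, c k) * 0 ^ (E.card - m))) := by
  have hratio := tendsto_finsetProd E hE
  have hpow : Tendsto (fun ε : ℝ => ε ^ (E.card - m)) (𝓝[>] 0) (𝓝 (0 ^ (E.card - m))) :=
    (tendsto_nhdsWithin_of_tendsto_nhds tendsto_id).pow _
  have hunerased : Tendsto (fun ε => ∏ k ∈ D, (1 - p ε k)) (𝓝[>] 0) (𝓝 1) := by
    simpa using tendsto_finsetProd D fun k hk => (hD k hk).const_sub 1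
  refine (mul_one (_ : ℝ) ▸ (hratio.mul hpow).mul hunerased).congr' ?_
  filter_upwards [self_mem_nhdsWithin] with ε (hε : 0 < ε)
  rw [Finset.prod_div_distrib, Finset.prod_const, pow_sub₀ ε hε.ne' hm]
  field_simp

lemma prod_boole_mul_zero_pow {ι : Type*} [DecidableEq ι] (E S : Finset ι) {m : ℕ}
    (hm : m ≤ E.card) :
    (∏ k ∈ E, if k ∉ S then (1 : ℝ) else 0) * 0 ^ (E.card - m) =
      if Disjoint E S ∧ E.card = m then 1 else 0 := by
  have hcard : E.card - m = 0 ↔ E.card = m := by omega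
  rw [Finset.prod_boole, zero_pow_eq]
  simp only [hcard, Finset.disjoint_left, ite_zero_mul_ite_zero, mul_one]

lemma tendsto_hiding_term_div_pow {n : ℕ} {C : Submodule (ZMod 2) (Fin n → ZMod 2)} {j : Fin n}
    {d : ℕ} (hd : ∀ x ∈ C, x j = 1 → d ≤ wt x) {S : Finset (Fin n)} {q : ℝ → Fin n → ℝ}
    (hratio : ∀ k ≠ j, Tendsto (fun ε => q ε k / ε) (𝓝[>] 0) (𝓝 (if k ∉ S then 1 else 0)))
    {E : Finset (Fin n)} (hE : E ⊆ univ.erase j) :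
    Tendsto (fun ε => (if Hides C j E then (∏ k ∈ E, q ε k) * ∏ k ∈ (univ.erase j) \ E,
        (1 - q ε k) else 0) / ε ^ (d - 1)) (𝓝[>] 0)
      (𝓝 (if Hides C j E ∧ Disjoint E S ∧ E.card = d - 1 then 1 else 0)) := by
  have hEj : ∀ k ∈ E, k ≠ j := fun k hk => Finset.ne_of_mem_erase (hE hk)
  by_cases hH : Hides C j E
  · have hm : d - 1 ≤ E.card := by
      have := hH.le_card_add_one hd fun h => hEj j h rfl
      omega
    simp only [hH, if_true, true_and]
    convert tendsto_pattern_prob_div_pow hm (fun k hk => hratio k (hEj k hk)) fun k hk =>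
      tendsto_nhds_zero_of_tendsto_div_self
        (hratio k (Finset.ne_of_mem_erase (Finset.mem_sdiff.1 hk).1)) using 2
    exact (prod_boole_mul_zero_pow E S hm).symm
  · simpa only [hH, if_false, zero_div, false_and] using tendsto_const_nhds

end Asymptotics

theorem phi_asymptotics_updated_general (n : ℕ) (C : Submodule (ZMod 2) (Fin n → ZMod 2)) (j : Fin n)
    (d : ℕ)
    (hd_lb : ∀ x ∈ C, x j = 1 → d ≤ wt x)
    (hd_ex : ∃ x ∈ C, x j = 1 ∧ wt x = d)
    (S : Finset (Fin n)) (hjS : j ∉ S)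
    (q : ℝ → Fin n → ℝ)
    (hq_out : ∀ ε ∈ Set.Ioo (0:ℝ) 1, ∀ k, k ≠ j → k ∉ S → q ε k = ε)
    (hq_in : ∀ k ∈ S,
      Filter.Tendsto (fun ε : ℝ => q ε k / ε) (nhdsWithin 0 (Set.Ioi 0)) (nhds 0))
    (h : ℕ)
    (hh : h = {x : Fin n → ZMod 2 | x ∈ C ∧ x j = 1 ∧ wt x = d ∧ ∀ k ∈ S, x k = 0}.ncard) :
    Filter.Tendsto (fun ε : ℝ => phi C j (q ε) / ε ^ (d - 1))
      (nhdsWithin 0 (Set.Ioi 0)) (nhds (h : ℝ)) := by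
  obtain ⟨x, -, hxj, hxd⟩ := hd_ex
  have hd_pos := pos_of_wt_eq hxj hxd
  have hratio : ∀ k ≠ j, Tendsto (fun ε => q ε k / ε) (𝓝[>] 0) (𝓝 (if k ∉ S then 1 else 0)) := by
    intro k hk
    by_cases hkS : k ∈ S
    · simpa [hkS] using hq_in k hkS
    · simp only [hkS, not_false_eq_true, if_true]
      refine tendsto_const_nhds.congr' ?_
      filter_upwards [Ioo_mem_nhdsGT one_pos] with ε hε
      rw [hq_out ε hε k hk hkS, div_self hε.1.ne']
  have hsum := tendsto_finsetSum (univ.erase j).powerset fun E hE =>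
    tendsto_hiding_term_div_pow (E := E) hd_lb hratio (Finset.mem_powerset.1 hE)
  rw [Finset.sum_boole, card_minimal_hiding_patterns hd_lb hd_pos hjS, ← hh] at hsum
  simpa only [phi_eq_sum_hides, Finset.sum_div] using hsum

/-- if the erasure probabilities at the 'already updated' positions `k ∈ S` are
`o(ε)` while all other positions (besides `j`) have erasure probability exactly `ε`, then
`Φ_{C,j}(q(ε))` is asymptotic to `h_j · ε^(d_j - 1)` as `ε → 0⁺`, where `h_j` counts the
minimum-weight codewords with `x j = 1` whose support avoids `S`. -/
theorem phi_asymptotics_updated (n : ℕ) (C : Submodule (ZMod 2) (Fin n → ZMod 2)) (j : Fin n)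
    (d : ℕ)
    (hd_lb : ∀ x ∈ C, x j = 1 → d ≤ wt x)
    (hd_ex : ∃ x ∈ C, x j = 1 ∧ wt x = d)
    (S : Finset (Fin n)) (hjS : j ∉ S)
    (q : ℝ → Fin n → ℝ)
    (hq_range : ∀ ε ∈ Set.Ioo (0:ℝ) 1, ∀ k, k ≠ j → q ε k ∈ Set.Icc (0:ℝ) 1)
    (hq_out : ∀ ε ∈ Set.Ioo (0:ℝ) 1, ∀ k, k ≠ j → k ∉ S → q ε k = ε)
    (hq_in : ∀ k ∈ S,
      Filter.Tendsto (fun ε : ℝ => q ε k / ε) (nhdsWithin 0 (Set.Ioi 0)) (nhds 0))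
    (h : ℕ)
    (hh : h = {x : Fin n → ZMod 2 | x ∈ C ∧ x j = 1 ∧ wt x = d ∧ ∀ k ∈ S, x k = 0}.ncard) :
    Filter.Tendsto (fun ε : ℝ => phi C j (q ε) / ε ^ (d - 1))
      (nhdsWithin 0 (Set.Ioi 0)) (nhds (h : ℝ)) :=
  phi_asymptotics_updated_general n C j d hd_lb hd_ex S hjS q hq_out hq_in h hh
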